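/- Let ρ be the polynomial representation of HH_N(q,t) on ℂ[X_1^{±1},…,X_N^{±1}] and f ∈ ℂ[X] a polynomial. Define Y_i(f) := Y_i · T_{i−1}^{-1}⋯T_1^{-1} f(X_1^{-1}) T_1⋯T_{i−1}. Then the elements Y_i(f) pairwise commute: [Y_i(f), Y_j(f)] = 0 for all i, j. -/
import Mathlib
set_option linter.unusedSectionVars false

open Polynomial

/-! ### Auxiliary general lemmas -/

section Aux
variable {A : Type*} [Ring A] [Algebra ℂ A]

/-- commuting with an element implies commuting with polynomials in it -/
lemma aux_commute_aeval {u a : A} (h : Commute u a) (f : ℂ[X]) :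
    Commute u (Polynomial.aeval a f) := by
  induction f using Polynomial.induction_on' with
  | add p q hp hq => rw [map_add]; exact hp.add_right hq
  | monomial n r =>
      rw [Polynomial.aeval_monomial]
      exact (Commute.mul_right (Algebra.commutes r u).symm (h.pow_right n) : _)

/-- conjugation by an invertible element as an algebra homomorphism -/
noncomputable def conjHom (u v : A) (h1 : u * v = 1) (h2 : v * u = 1) : A →ₐ[ℂ] A where
  toFun a := u * a * v
  map_one' := by show u * 1 * v = 1; rw [mul_one, h1]
  map_mul' a b := by
    show u * (a * b) * v = (u * a * v) * (u * b * v)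
    calc u * (a * b) * v = u * a * (1 * (b * v)) := by noncomm_ring
      _ = u * a * ((v * u) * (b * v)) := by rw [h2]
      _ = u * a * v * (u * b * v) := by noncomm_ring
  map_zero' := by simp
  map_add' a b := by show u * (a + b) * v = u * a * v + u * b * v; noncomm_ring
  commutes' r := by
    show u * algebraMap ℂ A r * v = algebraMap ℂ A r
    rw [Algebra.algebraMap_eq_smul_one]
    simp only [mul_smul_comm, smul_mul_assoc, mul_one, h1]

lemma conjHom_aeval (u v : A) (h1 : u * v = 1) (h2 : v * u = 1) (a : A) (f : ℂ[X]) :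
    u * (Polynomial.aeval a f) * v = Polynomial.aeval (u * a * v) f := by
  have := Polynomial.aeval_algHom_apply (conjHom u v h1 h2) a f
  exact this.symm

/-- inverse commutes when the element commutes -/
lemma aux_inv_comm_left {a ai b : A} (ha1 : a * ai = 1) (ha2 : ai * a = 1)
    (h : a * b = b * a) : ai * b = b * ai := by
  calc ai * b = ai * b * (a * ai) := by rw [ha1, mul_one]
    _ = ai * (b * a) * ai := by noncomm_ring
    _ = ai * (a * b) * ai := by rw [h]
    _ = (ai * a) * (b * ai) := by noncomm_ring
    _ = b * ai := by rw [ha2, one_mul]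

end Aux
open Polynomial
set_option linter.unusedSectionVars false

section Sym
variable {A : Type*} [Ring A] [Algebra ℂ A] (T x y c : A)
  (hxy : Commute x y) (hcy : c * y = y * c)
  (hTx : T * x = c * x + y * T) (hTy : T * y = x * T - c * x)
include hxy hcy hTx hTy

lemma aux_Tsum : Commute T (x + y) := by
  show T * (x + y) = (x + y) * T
  rw [mul_add, hTx, hTy, add_mul]
  abel

lemma aux_Tprod : Commute T (x * y) := by
  show T * (x * y) = (x * y) * T
  calc T * (x * y) = (T * x) * y := by rw [mul_assoc]
    _ = (c * x + y * T) * y := by rw [hTx]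
    _ = c * (x * y) + y * (T * y) := by noncomm_ring
    _ = c * (x * y) + y * (x * T) - y * (c * x) := by rw [hTy]; noncomm_ring
    _ = c * (x * y) + (y * x) * T - (y * c) * x := by noncomm_ring
    _ = c * (x * y) + (x * y) * T - (c * y) * x := by rw [hxy.symm.eq, hcy]
    _ = (x * y) * T + (c * (x * y) - c * (y * x)) := by noncomm_ring
    _ = (x * y) * T := by rw [hxy.symm.eq]; noncomm_ring

lemma aux_Tpow : ∀ k, Commute T (x ^ k + y ^ k) := by
  intro k
  induction k using Nat.strong_induction_on with
  | _ k IH =>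
  match k with
  | 0 => simpa using Commute.add_right (Commute.one_right T) (Commute.one_right T)
  | 1 => simpa using aux_Tsum T x y c hxy hcy hTx hTy
  | (m+2) =>
    have ih1 := IH (m+1) (by omega)
    have ih0 := IH m (by omega)
    rw [pow_succ', pow_succ'] at ih1
    have hyx : y * x = x * y := hxy.symm.eq
    have e : (x + y) * (x * x ^ m + y * y ^ m) - (x * y) * (x ^ m + y ^ m)
        = x * (x * x ^ m) + y * (y * y ^ m) := by
      calc (x + y) * (x * x ^ m + y * y ^ m) - (x * y) * (x ^ m + y ^ m)
          = x * (x * x ^ m) + x * y * (y ^ m) + ((y * x) * x ^ m + y * (y * y ^ m))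
              - ((x * y) * x ^ m + x * y * y ^ m) := by noncomm_ring
        _ = x * (x * x ^ m) + x * y * (y ^ m) + ((x * y) * x ^ m + y * (y * y ^ m))
              - ((x * y) * x ^ m + x * y * y ^ m) := by rw [hyx]
        _ = x * (x * x ^ m) + y * (y * y ^ m) := by noncomm_ring
    have hx2 : x ^ (m+2) = x * (x * x ^ m) := by rw [pow_succ', pow_succ']
    have hy2 : y ^ (m+2) = y * (y * y ^ m) := by rw [pow_succ', pow_succ']
    rw [hx2, hy2, ← e]
    exact ((aux_Tsum T x y c hxy hcy hTx hTy).mul_right ih1).sub_right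
      ((aux_Tprod T x y c hxy hcy hTx hTy).mul_right ih0)

lemma aux_Tmono : ∀ m n, Commute T (x ^ m * y ^ n + x ^ n * y ^ m) := by
  have aux : ∀ m d, Commute T (x ^ m * y ^ (m + d) + x ^ (m + d) * y ^ m) := by
    intro m d
    have h1 : x ^ m * y ^ (m + d) = (x * y) ^ m * y ^ d := by
      rw [hxy.mul_pow, pow_add, mul_assoc]
    have h2 : x ^ (m + d) * y ^ m = (x * y) ^ m * x ^ d := by
      rw [hxy.mul_pow, pow_add]
      calc x ^ m * x ^ d * y ^ m = x ^ m * (x ^ d * y ^ m) := by rw [mul_assoc]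
        _ = x ^ m * (y ^ m * x ^ d) := by rw [(hxy.pow_pow d m).eq]
        _ = x ^ m * y ^ m * x ^ d := by rw [mul_assoc]
    have h3 : x ^ m * y ^ (m + d) + x ^ (m + d) * y ^ m = (x * y) ^ m * (x ^ d + y ^ d) := by
      rw [h1, h2, mul_add, add_comm]
    rw [h3]
    exact ((aux_Tprod T x y c hxy hcy hTx hTy).pow_right m).mul_right
      (aux_Tpow T x y c hxy hcy hTx hTy d)
  intro m n
  rcases le_total m n with h | h
  · obtain ⟨d, rfl⟩ : ∃ d, n = m + d := ⟨n - m, by omega⟩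
    exact aux m d
  · obtain ⟨d, rfl⟩ : ∃ d, m = n + d := ⟨m - n, by omega⟩
    have := aux n d
    rwa [add_comm] at this

lemma aux_Tsym : ∀ g h : ℂ[X],
    Commute T (aeval x g * aeval y h + aeval x h * aeval y g) := by
  have hmono : ∀ (n : ℕ) (r : ℂ) (h : ℂ[X]),
      Commute T (aeval x (monomial n r) * aeval y h + aeval x h * aeval y (monomial n r)) := by
    intro n r h
    induction h using Polynomial.induction_on' with
    | add p q hp hq =>
      simp only [map_add]
      have e : aeval x (monomial n r) * (aeval y p + aeval y q)
            + (aeval x p + aeval x q) * aeval y (monomial n r)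
          = (aeval x (monomial n r) * aeval y p + aeval x p * aeval y (monomial n r))
            + (aeval x (monomial n r) * aeval y q + aeval x q * aeval y (monomial n r)) := by
        noncomm_ring
      rw [e]
      exact hp.add_right hq
    | monomial m s =>
      simp only [aeval_monomial]
      have hrx : ∀ (u : A) (w : ℂ), u * algebraMap ℂ A w = algebraMap ℂ A w * u := fun u w =>
        (Algebra.commutes w u).symm
      have e1 : algebraMap ℂ A r * x ^ n * (algebraMap ℂ A s * y ^ m)
          = algebraMap ℂ A r * (algebraMap ℂ A s * (x ^ n * y ^ m)) := by
        calc algebraMap ℂ A r * x ^ n * (algebraMap ℂ A s * y ^ m)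
            = algebraMap ℂ A r * (x ^ n * algebraMap ℂ A s) * y ^ m := by noncomm_ring
          _ = algebraMap ℂ A r * (algebraMap ℂ A s * x ^ n) * y ^ m := by rw [hrx]
          _ = algebraMap ℂ A r * (algebraMap ℂ A s * (x ^ n * y ^ m)) := by noncomm_ring
      have e2 : algebraMap ℂ A s * x ^ m * (algebraMap ℂ A r * y ^ n)
          = algebraMap ℂ A r * (algebraMap ℂ A s * (x ^ m * y ^ n)) := by
        calc algebraMap ℂ A s * x ^ m * (algebraMap ℂ A r * y ^ n)
            = algebraMap ℂ A s * (x ^ m * algebraMap ℂ A r) * y ^ n := by noncomm_ring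
          _ = algebraMap ℂ A s * (algebraMap ℂ A r * x ^ m) * y ^ n := by rw [hrx]
          _ = algebraMap ℂ A r * (algebraMap ℂ A s * (x ^ m * y ^ n)) := by
              rw [← mul_assoc, ← mul_assoc, hrx (algebraMap ℂ A s) r, mul_assoc, mul_assoc]
      rw [e1, e2, ← mul_add, ← mul_add]
      have hc1 : Commute T (algebraMap ℂ A r) := (Algebra.commutes r T).symm
      have hc2 : Commute T (algebraMap ℂ A s) := (Algebra.commutes s T).symm
      exact hc1.mul_right (hc2.mul_right (aux_Tmono T x y c hxy hcy hTx hTy n m))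
  intro g
  induction g using Polynomial.induction_on' with
  | add p q hp hq =>
    intro h
    simp only [map_add]
    have e : (aeval x p + aeval x q) * aeval y h + aeval x h * (aeval y p + aeval y q)
        = (aeval x p * aeval y h + aeval x h * aeval y p)
          + (aeval x q * aeval y h + aeval x h * aeval y q) := by noncomm_ring
    rw [e]
    exact (hp h).add_right (hq h)
  | monomial n r => intro h; exact hmono n r h

/-- T commutes with f(y)·f(x) -/
lemma aux_TFF (f : ℂ[X]) : Commute T (aeval y f * aeval x f) := by
  have hcF : Commute (aeval x f) (aeval y f) :=
    aux_commute_aeval ((aux_commute_aeval hxy.symm f).symm) f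
  have h2 := aux_Tsym T x y c hxy hcy hTx hTy f f
  have e : aeval y f * aeval x f
      = (2⁻¹ : ℂ) • (aeval x f * aeval y f + aeval x f * aeval y f) := by
    rw [← two_smul ℂ (aeval x f * aeval y f), smul_smul]
    norm_num
    exact hcF.symm.eq
  rw [e]
  exact h2.smul_right _

end Sym



section Abstract
variable {A : Type*} [Monoid A]

/-- word rearrangement: braid + commuting letter -/
lemma aux_key1 (a b w : A) (hbr : a * b * a = b * a * b) (hwb : w * b = b * w) :
    a * (b * (a * w * a) * b) = (b * (a * w * a) * b) * a := by
  calc a * (b * (a * w * a) * b)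
      = (a * b * a) * (w * (a * b)) := by simp only [mul_assoc]
    _ = (b * a * b) * (w * (a * b)) := by rw [hbr]
    _ = (b * a) * ((b * w) * (a * b)) := by simp only [mul_assoc]
    _ = (b * a) * ((w * b) * (a * b)) := by rw [hwb]
    _ = (b * (a * w)) * (b * a * b) := by simp only [mul_assoc]
    _ = (b * (a * w)) * (a * b * a) := by rw [hbr]
    _ = (b * (a * w * a) * b) * a := by simp only [mul_assoc]

/-- word rearrangement for the inductive step of the core identity -/
lemma aux_key2 (a b w : A) (hbr : a * b * a = b * a * b) (hwb : w * b = b * w)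
    (hQ : w * a * w * a = a * w * a * w) :
    (a * w * a) * b * (a * w * a) * b = b * (a * w * a) * b * (a * w * a) := by
  calc (a * w * a) * b * (a * w * a) * b
      = (a * w) * ((a * b * a) * (w * (a * b))) := by simp only [mul_assoc]
    _ = (a * w) * ((b * a * b) * (w * (a * b))) := by rw [hbr]
    _ = a * ((w * b) * (a * (b * (w * (a * b))))) := by simp only [mul_assoc]
    _ = a * ((b * w) * (a * (b * (w * (a * b))))) := by rw [hwb]
    _ = ((a * b * w) * a) * ((b * w) * (a * b)) := by simp only [mul_assoc]
    _ = ((a * b * w) * a) * ((w * b) * (a * b)) := by rw [← hwb]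
    _ = (a * b) * ((w * a * w) * (b * a * b)) := by simp only [mul_assoc]
    _ = (a * b) * ((w * a * w) * (a * b * a)) := by rw [← hbr]
    _ = (a * b) * ((w * a * w * a) * (b * a)) := by simp only [mul_assoc]
    _ = (a * b) * ((a * w * a * w) * (b * a)) := by rw [hQ]
    _ = ((a * b * a) * (w * a * w)) * (b * a) := by simp only [mul_assoc]
    _ = ((b * a * b) * (w * a * w)) * (b * a) := by rw [hbr]
    _ = (b * a * b * w * a) * ((w * b) * a) := by simp only [mul_assoc]
    _ = (b * a * b * w * a) * ((b * w) * a) := by rw [hwb]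
    _ = (b * a) * ((b * w) * (a * (b * (w * a)))) := by simp only [mul_assoc]
    _ = (b * a) * ((w * b) * (a * (b * (w * a)))) := by rw [← hwb]
    _ = (b * a * w) * ((b * a * b) * (w * a)) := by simp only [mul_assoc]
    _ = (b * a * w) * ((a * b * a) * (w * a)) := by rw [← hbr]
    _ = b * (a * w * a) * b * (a * w * a) := by simp only [mul_assoc]

variable (N : ℕ) (t z : ℕ → A)

/-- z i commutes with t j whenever j ≥ i+1 or j ≤ i−2 -/
lemma aux_zt
    (hbraid : ∀ i, 1 ≤ i → i + 2 ≤ N → t i * t (i+1) * t i = t (i+1) * t i * t (i+1))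
    (hfar : ∀ i j, 1 ≤ i → i + 2 ≤ j → j + 1 ≤ N → t i * t j = t j * t i)
    (hrec : ∀ i, 1 ≤ i → i + 1 ≤ N → z (i+1) = t i * z i * t i)
    (hz1 : ∀ j, 2 ≤ j → j + 1 ≤ N → z 1 * t j = t j * z 1) :
    ∀ i, 1 ≤ i → i ≤ N → ∀ j, 1 ≤ j → j + 1 ≤ N → (i + 1 ≤ j ∨ j + 2 ≤ i) →
      z i * t j = t j * z i := by
  intro i
  induction i using Nat.strong_induction_on with
  | _ i IH =>
  intro hi1 hiN j hj1 hjN hij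
  rcases Nat.lt_or_ge i 2 with hi2 | hi2
  · -- i = 1
    obtain rfl : i = 1 := by omega
    exact hz1 j (by omega) hjN
  · obtain ⟨k, rfl⟩ : ∃ k, i = k + 1 := ⟨i - 1, by omega⟩
    have hk1 : 1 ≤ k := by omega
    have hzrec := hrec k hk1 (by omega)
    by_cases hspec : j + 2 = k + 1
    · -- braid case : k = j + 1
      obtain rfl : k = j + 1 := by omega
      have hbr := hbraid j hj1 (by omega)
      have hz2 := hrec j hj1 (by omega)
      have hwb : z j * t (j+1) = t (j+1) * z j :=
        IH j (by omega) hj1 (by omega) (j+1) (by omega) (by omega) (Or.inl (by omega))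
      rw [hzrec, hz2]
      exact (aux_key1 (t j) (t (j+1)) (z j) hbr hwb).symm
    · have h' : k + 2 ≤ j ∨ j + 2 ≤ k := by omega
      have htt : Commute (t j) (t k) := by
        rcases h' with h | h
        · exact (hfar k j hk1 h hjN).symm
        · exact (hfar j k hj1 h (by omega))
      have hzt : Commute (t j) (z k) :=
        (IH k (by omega) hk1 (by omega) j hj1 hjN (by omega)).symm
      rw [hzrec]
      exact ((htt.mul_right hzt).mul_right htt).symm.eq

/-- the core identity propagates up -/
lemma aux_Q
    (hbraid : ∀ i, 1 ≤ i → i + 2 ≤ N → t i * t (i+1) * t i = t (i+1) * t i * t (i+1))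
    (hfar : ∀ i j, 1 ≤ i → i + 2 ≤ j → j + 1 ≤ N → t i * t j = t j * t i)
    (hrec : ∀ i, 1 ≤ i → i + 1 ≤ N → z (i+1) = t i * z i * t i)
    (hz1 : ∀ j, 2 ≤ j → j + 1 ≤ N → z 1 * t j = t j * z 1)
    (hcore : 2 ≤ N → z 1 * t 1 * z 1 * t 1 = t 1 * z 1 * t 1 * z 1) :
    ∀ k, 1 ≤ k → k + 1 ≤ N → z k * t k * z k * t k = t k * z k * t k * z k := by
  intro k
  induction k with
  | zero => omega
  | succ m IHm =>
    intro hm1 hmN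
    rcases Nat.lt_or_ge m 1 with hm | hm
    · obtain rfl : m = 0 := by omega
      exact hcore (by omega)
    · have hrecm := hrec m hm (by omega)
      have hbr := hbraid m hm (by omega)
      have hwb : z m * t (m+1) = t (m+1) * z m :=
        aux_zt N t z hbraid hfar hrec hz1 m hm (by omega) (m+1) (by omega) (by omega)
          (Or.inl (by omega))
      have hQ' : z m * t m * z m * t m = t m * z m * t m * z m := IHm hm (by omega)
      rw [hrecm]
      exact aux_key2 (t m) (t (m+1)) (z m) hbr hwb hQ'

/-- main abstract commutation lemma -/
lemma aux_abstract
    (hbraid : ∀ i, 1 ≤ i → i + 2 ≤ N → t i * t (i+1) * t i = t (i+1) * t i * t (i+1))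
    (hfar : ∀ i j, 1 ≤ i → i + 2 ≤ j → j + 1 ≤ N → t i * t j = t j * t i)
    (hrec : ∀ i, 1 ≤ i → i + 1 ≤ N → z (i+1) = t i * z i * t i)
    (hz1 : ∀ j, 2 ≤ j → j + 1 ≤ N → z 1 * t j = t j * z 1)
    (hcore : 2 ≤ N → z 1 * t 1 * z 1 * t 1 = t 1 * z 1 * t 1 * z 1) :
    ∀ i j, 1 ≤ i → i ≤ N → 1 ≤ j → j ≤ N → z i * z j = z j * z i := by
  -- adjacent case
  have hadj : ∀ i, 1 ≤ i → i + 1 ≤ N → z i * z (i+1) = z (i+1) * z i := by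
    intro i hi1 hiN
    have hQ := aux_Q N t z hbraid hfar hrec hz1 hcore i hi1 hiN
    rw [hrec i hi1 hiN]
    calc z i * (t i * z i * t i) = z i * t i * z i * t i := by simp only [mul_assoc]
      _ = t i * z i * t i * z i := hQ
  -- general case, i < j
  have hlt : ∀ j i, 1 ≤ i → i < j → j ≤ N → z i * z j = z j * z i := by
    intro j
    induction j using Nat.strong_induction_on with
    | _ j IH =>
    intro i hi1 hij hjN
    rcases Nat.lt_or_ge (i+1) j with h | h
    · -- j ≥ i + 2
      obtain ⟨m, rfl⟩ : ∃ m, j = m + 1 := ⟨j - 1, by omega⟩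
      have hrecm := hrec m (by omega) (by omega)
      have h1 : Commute (z i) (t m) :=
        aux_zt N t z hbraid hfar hrec hz1 i hi1 (by omega) m (by omega) (by omega)
          (Or.inl (by omega))
      have h2 : Commute (z i) (z m) := IH m (by omega) i hi1 (by omega) (by omega)
      rw [hrecm]
      exact ((h1.mul_right h2).mul_right h1).eq
    · obtain rfl : j = i + 1 := by omega
      exact hadj i hi1 hjN
  intro i j hi1 hiN hj1 hjN
  rcases Nat.lt_trichotomy i j with h | h | h
  · exact hlt j i hi1 h hjN
  · rw [h]
  · exact (hlt i j hj1 h hiN).symm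

end Abstract

/- STATEMENT 13: For a polynomial f ∈ ℂ[X], the elements
Y_i(f) := Y_i · T_{i−1}^{-1}⋯T_1^{-1} f(X_1^{-1}) T_1⋯T_{i−1} of HH_N(q,t)
pairwise commute. -/

/-- Cherednik's double affine Hecke algebra HH_N(q,t), t = 𝐭², presented by the
relations (R1)–(R12); an algebra A together with elements satisfying the
relations (generators indexed 1,…,N resp. 1,…,N−1). -/
structure DAHA (N : ℕ) (q bt : ℂ) (A : Type*) [Ring A] [Algebra ℂ A] where
  T : ℕ → A
  Tinv : ℕ → A
  X : ℕ → A
  Xinv : ℕ → A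
  Y : ℕ → A
  Yinv : ℕ → A
  hT : ∀ i, 1 ≤ i → i ≤ N - 1 → T i * Tinv i = 1 ∧ Tinv i * T i = 1
  hX : ∀ i, 1 ≤ i → i ≤ N → X i * Xinv i = 1 ∧ Xinv i * X i = 1
  hY : ∀ i, 1 ≤ i → i ≤ N → Y i * Yinv i = 1 ∧ Yinv i * Y i = 1
  R1 : ∀ i, 1 ≤ i → i ≤ N - 1 →
    (T i - algebraMap ℂ A bt) * (T i + algebraMap ℂ A bt⁻¹) = 0
  R2 : ∀ i, 1 ≤ i → i + 1 ≤ N - 1 → T i * T (i + 1) * T i = T (i + 1) * T i * T (i + 1)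
  R3 : ∀ i j, 1 ≤ i → i ≤ N - 1 → 1 ≤ j → j ≤ N - 1 → i + 2 ≤ j → T i * T j = T j * T i
  R4 : ∀ i, 1 ≤ i → i ≤ N - 1 → T i * X i * T i = X (i + 1)
  R5 : ∀ i j, 1 ≤ i → i ≤ N - 1 → 1 ≤ j → j ≤ N → j ≠ i → j ≠ i + 1 → T i * X j = X j * T i
  R6 : ∀ i, 1 ≤ i → i ≤ N - 1 → T i * Y i * T i = Y (i + 1)
  R7 : ∀ i j, 1 ≤ i → i ≤ N - 1 → 1 ≤ j → j ≤ N → j ≠ i → j ≠ i + 1 → T i * Y j = Y j * T i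
  R8 : 2 ≤ N → Xinv 1 * Yinv 2 * X 1 * Y 2 = T 1 * T 1
  R9 : ∀ i, 1 ≤ i → i ≤ N →
    Y i * (((List.range N).map (fun j => X (j + 1))).prod)
      = algebraMap ℂ A q * ((((List.range N).map (fun j => X (j + 1))).prod) * Y i)
  R10 : ∀ i, 1 ≤ i → i ≤ N →
    X i * (((List.range N).map (fun j => Y (j + 1))).prod)
      = algebraMap ℂ A q⁻¹ * ((((List.range N).map (fun j => Y (j + 1))).prod) * X i)
  R11 : ∀ i j, 1 ≤ i → i ≤ N → 1 ≤ j → j ≤ N → X i * X j = X j * X i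
  R12 : ∀ i j, 1 ≤ i → i ≤ N → 1 ≤ j → j ≤ N → Y i * Y j = Y j * Y i

/-- Y_i(f) = Y_i · T_{i−1}^{-1}⋯T_1^{-1} · f(X_1^{-1}) · T_1⋯T_{i−1} -/
noncomputable def DAHA.Yf {N : ℕ} {q bt : ℂ} {A : Type*} [Ring A] [Algebra ℂ A]
    (H : DAHA N q bt A) (f : Polynomial ℂ) (i : ℕ) : A :=
  H.Y i * (((List.range (i - 1)).reverse.map (fun j => H.Tinv (j + 1))).prod) *
    (Polynomial.aeval (H.Xinv 1) f) *
    (((List.range (i - 1)).map (fun j => H.T (j + 1))).prod)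


/-! ### Concrete computations in the DAHA -/

lemma aux_cancel {A : Type*} [Monoid A] {a b : A} (h : a * b = 1) (w : A) :
    a * (b * w) = w := by rw [← mul_assoc, h, one_mul]

namespace DAHA
variable {A : Type*} [Ring A] [Algebra ℂ A] {N : ℕ} {q bt : ℂ} (H : DAHA N q bt A)

lemma quad (hN : 2 ≤ N) (hbt : bt ≠ 0) :
    H.T 1 * H.T 1 = algebraMap ℂ A (bt - bt⁻¹) * H.T 1 + 1 := by
  have h1 := H.R1 1 le_rfl (by omega)
  have h2 : algebraMap ℂ A bt * algebraMap ℂ A bt⁻¹ = 1 := by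
    rw [← map_mul, mul_inv_cancel₀ hbt, map_one]
  have h3 : H.T 1 * algebraMap ℂ A bt⁻¹ = algebraMap ℂ A bt⁻¹ * H.T 1 :=
    (Algebra.commutes _ _).symm
  have e : (H.T 1 - algebraMap ℂ A bt) * (H.T 1 + algebraMap ℂ A bt⁻¹)
      = H.T 1 * H.T 1 + H.T 1 * algebraMap ℂ A bt⁻¹ - algebraMap ℂ A bt * H.T 1
        - algebraMap ℂ A bt * algebraMap ℂ A bt⁻¹ := by noncomm_ring
  rw [e, h2, h3] at h1
  have h4 : H.T 1 * H.T 1 = (H.T 1 * H.T 1 + algebraMap ℂ A bt⁻¹ * H.T 1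
        - algebraMap ℂ A bt * H.T 1 - 1)
      + ((algebraMap ℂ A bt - algebraMap ℂ A bt⁻¹) * H.T 1 + 1) := by noncomm_ring
  rw [map_sub, h4, h1, zero_add]

lemma Tinv_eq (hN : 2 ≤ N) (hbt : bt ≠ 0) :
    H.Tinv 1 = H.T 1 - algebraMap ℂ A (bt - bt⁻¹) := by
  obtain ⟨hTTi, hTiT⟩ := H.hT 1 le_rfl (by omega)
  have hc : H.T 1 * algebraMap ℂ A (bt - bt⁻¹) = algebraMap ℂ A (bt - bt⁻¹) * H.T 1 :=
    (Algebra.commutes _ _).symm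
  have h1 : H.T 1 * (H.T 1 - algebraMap ℂ A (bt - bt⁻¹)) = 1 := by
    rw [mul_sub, quad H hN hbt, hc]; noncomm_ring
  calc H.Tinv 1 = H.Tinv 1 * (H.T 1 * (H.T 1 - algebraMap ℂ A (bt - bt⁻¹))) := by
        rw [h1, mul_one]
    _ = (H.Tinv 1 * H.T 1) * (H.T 1 - algebraMap ℂ A (bt - bt⁻¹)) := by simp only [mul_assoc]
    _ = H.T 1 - algebraMap ℂ A (bt - bt⁻¹) := by rw [hTiT, one_mul]

lemma y_eq (hN : 2 ≤ N) : H.Xinv 2 = H.Tinv 1 * H.Xinv 1 * H.Tinv 1 := by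
  obtain ⟨hTTi, hTiT⟩ := H.hT 1 le_rfl (by omega)
  obtain ⟨hX1, hX1'⟩ := H.hX 1 le_rfl (by omega)
  obtain ⟨hX2, hX2'⟩ := H.hX 2 (by omega) hN
  have h4 := H.R4 1 le_rfl (by omega)
  norm_num at h4
  have k1 : (H.Tinv 1 * H.Xinv 1 * H.Tinv 1) * H.X 2 = 1 := by
    rw [← h4]
    calc (H.Tinv 1 * H.Xinv 1 * H.Tinv 1) * (H.T 1 * H.X 1 * H.T 1)
        = H.Tinv 1 * (H.Xinv 1 * (H.Tinv 1 * (H.T 1 * (H.X 1 * H.T 1)))) := by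
          simp only [mul_assoc]
      _ = H.Tinv 1 * H.T 1 := by rw [aux_cancel hTiT, aux_cancel hX1']
      _ = 1 := hTiT
  have k2 : H.X 2 * (H.Tinv 1 * H.Xinv 1 * H.Tinv 1) = 1 := by
    rw [← h4]
    calc (H.T 1 * H.X 1 * H.T 1) * (H.Tinv 1 * H.Xinv 1 * H.Tinv 1)
        = H.T 1 * (H.X 1 * (H.T 1 * (H.Tinv 1 * (H.Xinv 1 * H.Tinv 1)))) := by
          simp only [mul_assoc]
      _ = H.T 1 * H.Tinv 1 := by rw [aux_cancel hTTi, aux_cancel hX1]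
      _ = 1 := hTTi
  calc H.Xinv 2 = H.Xinv 2 * (H.X 2 * (H.Tinv 1 * H.Xinv 1 * H.Tinv 1)) := by
        rw [k2, mul_one]
    _ = (H.Xinv 2 * H.X 2) * (H.Tinv 1 * H.Xinv 1 * H.Tinv 1) := by simp only [mul_assoc]
    _ = H.Tinv 1 * H.Xinv 1 * H.Tinv 1 := by rw [hX2', one_mul]

lemma x_eq (hN : 2 ≤ N) : H.Xinv 1 = H.T 1 * H.Xinv 2 * H.T 1 := by
  obtain ⟨hTTi, hTiT⟩ := H.hT 1 le_rfl (by omega)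
  rw [y_eq H hN]
  simp only [mul_assoc, aux_cancel hTTi, hTiT, mul_one]

lemma Tx (hN : 2 ≤ N) (hbt : bt ≠ 0) :
    H.T 1 * H.Xinv 1
      = algebraMap ℂ A (bt - bt⁻¹) * H.Xinv 1 + H.Xinv 2 * H.T 1 := by
  have e : H.T 1 * (H.T 1 * H.Xinv 2 * H.T 1)
      = algebraMap ℂ A (bt - bt⁻¹) * (H.T 1 * H.Xinv 2 * H.T 1) + H.Xinv 2 * H.T 1 := by
    calc H.T 1 * (H.T 1 * H.Xinv 2 * H.T 1)
        = (H.T 1 * H.T 1) * (H.Xinv 2 * H.T 1) := by simp only [mul_assoc]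
      _ = (algebraMap ℂ A (bt - bt⁻¹) * H.T 1 + 1) * (H.Xinv 2 * H.T 1) := by
          rw [quad H hN hbt]
      _ = algebraMap ℂ A (bt - bt⁻¹) * (H.T 1 * H.Xinv 2 * H.T 1) + H.Xinv 2 * H.T 1 := by
          noncomm_ring
  rw [x_eq H hN]
  exact e

lemma Ty (hN : 2 ≤ N) (hbt : bt ≠ 0) :
    H.T 1 * H.Xinv 2
      = H.Xinv 1 * H.T 1 - algebraMap ℂ A (bt - bt⁻¹) * H.Xinv 1 := by
  obtain ⟨hTTi, hTiT⟩ := H.hT 1 le_rfl (by omega)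
  rw [y_eq H hN]
  calc H.T 1 * (H.Tinv 1 * H.Xinv 1 * H.Tinv 1)
      = H.Xinv 1 * H.Tinv 1 := by simp only [mul_assoc, aux_cancel hTTi]
    _ = H.Xinv 1 * (H.T 1 - algebraMap ℂ A (bt - bt⁻¹)) := by rw [Tinv_eq H hN hbt]
    _ = H.Xinv 1 * H.T 1 - H.Xinv 1 * algebraMap ℂ A (bt - bt⁻¹) := by rw [mul_sub]
    _ = H.Xinv 1 * H.T 1 - algebraMap ℂ A (bt - bt⁻¹) * H.Xinv 1 := by
        rw [Algebra.commutes]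

lemma xy_comm (hN : 2 ≤ N) : Commute (H.Xinv 1) (H.Xinv 2) := by
  obtain ⟨hX1, hX1'⟩ := H.hX 1 le_rfl (by omega)
  obtain ⟨hX2, hX2'⟩ := H.hX 2 (by omega) hN
  have h11 := H.R11 1 2 le_rfl (by omega) (by omega) hN
  have s1 : H.Xinv 1 * H.X 2 = H.X 2 * H.Xinv 1 := aux_inv_comm_left hX1 hX1' h11
  exact (aux_inv_comm_left hX2 hX2' s1.symm).symm

lemma starA (hN : 2 ≤ N) :
    H.Tinv 1 * H.Xinv 1 * H.T 1 * H.Y 1 = H.Y 1 * H.Xinv 2 := by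
  obtain ⟨hTTi, hTiT⟩ := H.hT 1 le_rfl (by omega)
  obtain ⟨hX1, hX1'⟩ := H.hX 1 le_rfl (by omega)
  obtain ⟨hY2, hY2'⟩ := H.hY 2 (by omega) hN
  have h8 := H.R8 hN
  have h6 := H.R6 1 le_rfl (by omega)
  norm_num at h6
  have e1 : H.Yinv 2 * H.X 1 * H.Y 2 = H.X 1 * (H.T 1 * H.T 1) := by
    rw [← h8]; simp only [mul_assoc, aux_cancel hX1]
  have e2 : H.X 1 * H.Y 2 = H.Y 2 * (H.X 1 * (H.T 1 * H.T 1)) := by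
    rw [← e1]; simp only [mul_assoc, aux_cancel hY2]
  have k : (H.X 1 * (H.T 1 * (H.T 1 * (H.Tinv 1 * (H.Tinv 1 * H.Xinv 1))))) = 1 := by
    rw [aux_cancel hTTi, aux_cancel hTTi, hX1]
  have e3 : H.Xinv 1 * H.Y 2 = H.Y 2 * (H.Tinv 1 * (H.Tinv 1 * H.Xinv 1)) := by
    calc H.Xinv 1 * H.Y 2
        = H.Xinv 1 * (H.Y 2 * (H.X 1 * (H.T 1 * (H.T 1 * (H.Tinv 1
            * (H.Tinv 1 * H.Xinv 1)))))) := by rw [k, mul_one]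
      _ = (H.Xinv 1 * (H.Y 2 * (H.X 1 * (H.T 1 * H.T 1))))
            * (H.Tinv 1 * (H.Tinv 1 * H.Xinv 1)) := by simp only [mul_assoc]
      _ = (H.Xinv 1 * (H.X 1 * H.Y 2)) * (H.Tinv 1 * (H.Tinv 1 * H.Xinv 1)) := by
          rw [← e2]
      _ = H.Y 2 * (H.Tinv 1 * (H.Tinv 1 * H.Xinv 1)) := by rw [aux_cancel hX1']
  rw [← h6] at e3
  rw [y_eq H hN]
  calc H.Tinv 1 * H.Xinv 1 * H.T 1 * H.Y 1
      = H.Tinv 1 * ((H.Xinv 1 * (H.T 1 * H.Y 1 * H.T 1)) * H.Tinv 1) := by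
        simp only [mul_assoc, hTTi, mul_one]
    _ = H.Tinv 1 * (((H.T 1 * H.Y 1 * H.T 1) * (H.Tinv 1 * (H.Tinv 1 * H.Xinv 1)))
          * H.Tinv 1) := by rw [e3]
    _ = H.Y 1 * (H.Tinv 1 * H.Xinv 1 * H.Tinv 1) := by
        simp only [mul_assoc, aux_cancel hTiT, aux_cancel hTTi]

lemma starF (hN : 2 ≤ N) (f : Polynomial ℂ) :
    Polynomial.aeval (H.Xinv 1) f * (H.T 1 * H.Y 1)
      = (H.T 1 * H.Y 1) * Polynomial.aeval (H.Xinv 2) f := by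
  obtain ⟨hTTi, hTiT⟩ := H.hT 1 le_rfl (by omega)
  obtain ⟨hY1, hY1'⟩ := H.hY 1 le_rfl (by omega)
  have hb : H.Tinv 1 * (Polynomial.aeval (H.Xinv 1) f) * H.T 1
      = Polynomial.aeval (H.Tinv 1 * H.Xinv 1 * H.T 1) f :=
    conjHom_aeval _ _ hTiT hTTi _ f
  have hd : H.Yinv 1 * (H.Tinv 1 * H.Xinv 1 * H.T 1) * H.Y 1 = H.Xinv 2 := by
    have sA := starA H hN
    simp only [mul_assoc] at sA ⊢
    rw [sA]
    exact aux_cancel hY1' _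
  have hc : H.Yinv 1 * (Polynomial.aeval (H.Tinv 1 * H.Xinv 1 * H.T 1) f) * H.Y 1
      = Polynomial.aeval (H.Xinv 2) f := by
    rw [conjHom_aeval _ _ hY1' hY1 _ f, hd]
  calc Polynomial.aeval (H.Xinv 1) f * (H.T 1 * H.Y 1)
      = H.T 1 * ((H.Tinv 1 * (Polynomial.aeval (H.Xinv 1) f) * H.T 1) * H.Y 1) := by
        simp only [mul_assoc, aux_cancel hTTi]
    _ = H.T 1 * ((Polynomial.aeval (H.Tinv 1 * H.Xinv 1 * H.T 1) f) * H.Y 1) := by rw [hb]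
    _ = H.T 1 * (H.Y 1 * ((H.Yinv 1 * (Polynomial.aeval (H.Tinv 1 * H.Xinv 1 * H.T 1) f)
          * H.Y 1))) := by simp only [mul_assoc, aux_cancel hY1]
    _ = H.T 1 * (H.Y 1 * Polynomial.aeval (H.Xinv 2) f) := by rw [hc]
    _ = (H.T 1 * H.Y 1) * Polynomial.aeval (H.Xinv 2) f := by rw [mul_assoc]

lemma Yf_one (f : Polynomial ℂ) :
    H.Yf f 1 = H.Y 1 * Polynomial.aeval (H.Xinv 1) f := by
  unfold DAHA.Yf
  simp

lemma core (hN : 2 ≤ N) (hbt : bt ≠ 0) (f : Polynomial ℂ) :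
    H.Yf f 1 * H.T 1 * H.Yf f 1 * H.T 1 = H.T 1 * H.Yf f 1 * H.T 1 * H.Yf f 1 := by
  have hTFF : Commute (H.T 1) (Polynomial.aeval (H.Xinv 2) f * Polynomial.aeval (H.Xinv 1) f) :=
    aux_TFF (H.T 1) (H.Xinv 1) (H.Xinv 2) (algebraMap ℂ A (bt - bt⁻¹))
      (xy_comm H hN) (Algebra.commutes _ _) (Tx H hN hbt) (Ty H hN hbt) f
  have hS := starF H hN f
  have h6 := H.R6 1 le_rfl (by omega)
  norm_num at h6
  have h12 := H.R12 1 2 le_rfl (by omega) (by omega) hN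
  have hYY : H.Y 1 * (H.T 1 * H.Y 1 * H.T 1) = (H.T 1 * H.Y 1 * H.T 1) * H.Y 1 := by
    rw [h6]; exact h12
  rw [Yf_one H f]
  calc (H.Y 1 * Polynomial.aeval (H.Xinv 1) f) * H.T 1
        * (H.Y 1 * Polynomial.aeval (H.Xinv 1) f) * H.T 1
      = H.Y 1 * ((Polynomial.aeval (H.Xinv 1) f * (H.T 1 * H.Y 1))
          * (Polynomial.aeval (H.Xinv 1) f * H.T 1)) := by simp only [mul_assoc]
    _ = H.Y 1 * (((H.T 1 * H.Y 1) * Polynomial.aeval (H.Xinv 2) f)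
          * (Polynomial.aeval (H.Xinv 1) f * H.T 1)) := by rw [hS]
    _ = (H.Y 1 * (H.T 1 * H.Y 1))
          * ((Polynomial.aeval (H.Xinv 2) f * Polynomial.aeval (H.Xinv 1) f) * H.T 1) := by
        simp only [mul_assoc]
    _ = (H.Y 1 * (H.T 1 * H.Y 1))
          * (H.T 1 * (Polynomial.aeval (H.Xinv 2) f * Polynomial.aeval (H.Xinv 1) f)) := by
        rw [← hTFF.eq]
    _ = (H.Y 1 * (H.T 1 * H.Y 1 * H.T 1))
          * (Polynomial.aeval (H.Xinv 2) f * Polynomial.aeval (H.Xinv 1) f) := by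
        simp only [mul_assoc]
    _ = ((H.T 1 * H.Y 1 * H.T 1) * H.Y 1)
          * (Polynomial.aeval (H.Xinv 2) f * Polynomial.aeval (H.Xinv 1) f) := by rw [hYY]
    _ = H.T 1 * (H.Y 1 * ((H.T 1 * H.Y 1) * Polynomial.aeval (H.Xinv 2) f))
          * Polynomial.aeval (H.Xinv 1) f := by simp only [mul_assoc]
    _ = H.T 1 * (H.Y 1 * (Polynomial.aeval (H.Xinv 1) f * (H.T 1 * H.Y 1)))
          * Polynomial.aeval (H.Xinv 1) f := by rw [← hS]
    _ = H.T 1 * (H.Y 1 * Polynomial.aeval (H.Xinv 1) f) * H.T 1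
          * (H.Y 1 * Polynomial.aeval (H.Xinv 1) f) := by simp only [mul_assoc]

lemma Yf_rec (f : Polynomial ℂ) :
    ∀ i, 1 ≤ i → i + 1 ≤ N → H.Yf f (i+1) = H.T i * H.Yf f i * H.T i := by
  intro i hi1 hiN
  obtain ⟨k, rfl⟩ : ∃ k, i = k + 1 := ⟨i - 1, by omega⟩
  obtain ⟨hTT, hTiT⟩ := H.hT (k+1) (by omega) (by omega)
  have hY := H.R6 (k+1) (by omega) (by omega)
  unfold DAHA.Yf
  simp only [Nat.add_sub_cancel, List.range_succ, List.reverse_append, List.reverse_cons,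
    List.reverse_nil, List.nil_append, List.cons_append, List.map_cons, List.map_append,
    List.prod_cons, List.prod_append, List.map_nil, List.prod_nil, mul_one, one_mul]
  rw [← hY]
  generalize (((List.range k).reverse.map (fun j => H.Tinv (j + 1))).prod) = Pi
  generalize (((List.range k).map (fun j => H.T (j + 1))).prod) = P
  calc (H.T (k+1) * H.Y (k+1) * H.T (k+1)) * (H.Tinv (k+1) * Pi)
        * Polynomial.aeval (H.Xinv 1) f * (P * H.T (k+1))
      = H.T (k+1) * (H.Y (k+1) * (H.T (k+1) * (H.Tinv (k+1)
          * (Pi * (Polynomial.aeval (H.Xinv 1) f * (P * H.T (k+1))))))) := by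
        simp only [mul_assoc]
    _ = H.T (k+1) * (H.Y (k+1) * (Pi * (Polynomial.aeval (H.Xinv 1) f
          * (P * H.T (k+1))))) := by rw [aux_cancel hTT]
    _ = H.T (k+1) * (H.Y (k+1) * Pi * Polynomial.aeval (H.Xinv 1) f * P) * H.T (k+1) := by
        simp only [mul_assoc]

lemma Yf_one_comm (f : Polynomial ℂ) :
    ∀ j, 2 ≤ j → j + 1 ≤ N → H.Yf f 1 * H.T j = H.T j * H.Yf f 1 := by
  intro j hj2 hjN
  obtain ⟨hX1, hX1'⟩ := H.hX 1 (by omega) (by omega)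
  have h7 := H.R7 j 1 (by omega) (by omega) le_rfl (by omega) (by omega) (by omega)
  have h5 := H.R5 j 1 (by omega) (by omega) le_rfl (by omega) (by omega) (by omega)
  have hx : H.Xinv 1 * H.T j = H.T j * H.Xinv 1 := aux_inv_comm_left hX1 hX1' h5.symm
  have hF : Commute (H.T j) (Polynomial.aeval (H.Xinv 1) f) :=
    aux_commute_aeval (a := H.Xinv 1) hx.symm f
  rw [Yf_one H f]
  exact (Commute.mul_right (h7 : Commute (H.T j) (H.Y 1)) hF).symm.eq

end DAHA

theorem statement13 {A : Type*} [Ring A] [Algebra ℂ A] (N : ℕ) (q bt : ℂ)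
    (H : DAHA N q bt A) (f : Polynomial ℂ) :
    ∀ i j, 1 ≤ i → i ≤ N → 1 ≤ j → j ≤ N → H.Yf f i * H.Yf f j = H.Yf f j * H.Yf f i := by
  intro i j hi1 hiN hj1 hjN
  rcases eq_or_ne i j with rfl | hij
  · rfl
  · have hN : 2 ≤ N := by omega
    by_cases hbt0 : bt = 0
    · -- degenerate case: the algebra is trivial
      have h1 := H.R1 1 le_rfl (by omega)
      subst hbt0
      simp only [inv_zero, map_zero, sub_zero, add_zero] at h1
      obtain ⟨hTT, hTiT⟩ := H.hT 1 le_rfl (by omega)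
      have h0 : (0 : A) = 1 := by
        calc (0 : A) = H.Tinv 1 * (H.T 1 * H.T 1) * H.Tinv 1 := by rw [h1]; simp
          _ = (H.Tinv 1 * H.T 1) * (H.T 1 * H.Tinv 1) := by simp only [mul_assoc]
          _ = 1 := by rw [hTiT, hTT, one_mul]
      haveI := subsingleton_of_zero_eq_one h0
      exact Subsingleton.elim _ _
    · refine aux_abstract N H.T (H.Yf f) ?_ ?_ ?_ ?_ ?_ i j hi1 hiN hj1 hjN
      · intro i h1 h2
        exact H.R2 i h1 (by omega)
      · intro i j h1 h2 h3
        exact H.R3 i j h1 (by omega) (by omega) (by omega) h2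
      · exact H.Yf_rec f
      · exact H.Yf_one_comm f
      · intro _
        exact H.core hN hbt0 f
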